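/- arXiv:2007.08611 — 2 statements merged into one kernel-verified Lean document; each statement's English description precedes it below -/
import Mathlib

section
/- The function d((x,t),(y,s)) := min{ |x'-y'| + |x_n - y_n| + |t-s|^{1/2}, |x'-y'| + |x_n| + |y_n| + |t-s| } defined on ℝ^{n+1} (with x = (x', x_n) ∈ ℝ^{n-1} × ℝ and t ∈ ℝ) satisfies the triangle inequality: d((x,t),(z,r)) ≤ d((x,t),(y,s)) + d((y,s),(z,r)) for all points (x,t), (y,s), (z,r). -/
/-!
The spatial part `‖x' - y'‖` is common to both terms of the minimum and satisfies the triangle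
inequality on its own, so it suffices to treat the `(xₙ, t)`-part, which is the minimum of the
parabolic distance `|xₙ - yₙ| + √|t - s|` and the distance `|xₙ| + |yₙ| + |t - s|` through the
boundary `xₙ = 0`. Each of the two is a pseudometric, and the minimum of two pseudometrics is again
one as soon as the mixed triangle inequality `min (f a c) (g a c) ≤ f a b + g b c` holds. For the
mixed inequality, with `u = |t - s|` and `v = |s - r|`: if `u ≤ 1` then `u ≤ √u` and the path through
the boundary is short, while if `u ≥ 1` then `√(u + v) ≤ √u + v` and the parabolic path is short.
-/

noncomputable section

abbrev E (m : ℕ) := EuclideanSpace ℝ (Fin m)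

/-- The distance `d` on ℝ^{n+1} = ℝ^{n-1} × ℝ × ℝ (point = (x', xₙ, t)). -/
noncomputable def sdist {m : ℕ} (p q : E m × ℝ × ℝ) : ℝ :=
  min (‖p.1 - q.1‖ + |p.2.1 - q.2.1| + Real.sqrt |p.2.2 - q.2.2|)
      (‖p.1 - q.1‖ + |p.2.1| + |q.2.1| + |p.2.2 - q.2.2|)

open Real

theorem Real.sqrt_add_le_sqrt_add_sqrt {x y : ℝ} (hx : 0 ≤ x) (hy : 0 ≤ y) :
    √(x + y) ≤ √x + √y := by
  rw [sqrt_le_left (by positivity)]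
  nlinarith [sq_sqrt hx, sq_sqrt hy, sqrt_nonneg x, sqrt_nonneg y]

theorem Real.min_sqrt_add_le {u v : ℝ} (hu : 0 ≤ u) (hv : 0 ≤ v) :
    min √(u + v) (u + v) ≤ √u + v := by
  rcases le_total u 1 with hu₁ | hu₁
  · have : u ≤ √u := le_sqrt_self_iff.mpr hu₁
    exact (min_le_right _ _).trans (by linarith)
  · have : 1 ≤ √u := one_le_sqrt.mpr hu₁
    refine (min_le_left _ _).trans ?_
    rw [sqrt_le_left (by positivity)]
    nlinarith [sq_sqrt hu]

section MinTriangle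

variable {α : Type*} {f g : α → α → ℝ}

theorem min_le_min_add_min (hf_comm : ∀ a b, f a b = f b a) (hg_comm : ∀ a b, g a b = g b a)
    (hf : ∀ a b c, f a c ≤ f a b + f b c) (hg : ∀ a b c, g a c ≤ g a b + g b c)
    (hfg : ∀ a b c, min (f a c) (g a c) ≤ f a b + g b c) (a b c : α) :
    min (f a c) (g a c) ≤ min (f a b) (g a b) + min (f b c) (g b c) := by
  rcases min_choice (f a b) (g a b) with hab | hab <;>
    rcases min_choice (f b c) (g b c) with hbc | hbc <;> rw [hab, hbc]
  · exact (min_le_left _ _).trans (hf a b c)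
  · exact hfg a b c
  · calc min (f a c) (g a c) = min (f c a) (g c a) := by rw [hf_comm, hg_comm]
      _ ≤ f c b + g b a := hfg c b a
      _ = g a b + f b c := by rw [hf_comm, hg_comm, add_comm]
  · exact (min_le_right _ _).trans (hg a b c)

end MinTriangle

def parabolicDist (a b : ℝ × ℝ) : ℝ := |a.1 - b.1| + √|a.2 - b.2|

def boundaryDist (a b : ℝ × ℝ) : ℝ := |a.1| + |b.1| + |a.2 - b.2|

theorem parabolicDist_comm (a b : ℝ × ℝ) : parabolicDist a b = parabolicDist b a := by
  simp only [parabolicDist, abs_sub_comm]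

theorem boundaryDist_comm (a b : ℝ × ℝ) : boundaryDist a b = boundaryDist b a := by
  simp only [boundaryDist, abs_sub_comm, add_comm |a.1|]

theorem parabolicDist_triangle (a b c : ℝ × ℝ) :
    parabolicDist a c ≤ parabolicDist a b + parabolicDist b c := by
  have hx := abs_sub_le a.1 b.1 c.1
  have ht : √|a.2 - c.2| ≤ √|a.2 - b.2| + √|b.2 - c.2| :=
    (sqrt_le_sqrt (abs_sub_le a.2 b.2 c.2)).trans
      (sqrt_add_le_sqrt_add_sqrt (abs_nonneg _) (abs_nonneg _))
  simp only [parabolicDist]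
  linarith

theorem boundaryDist_triangle (a b c : ℝ × ℝ) :
    boundaryDist a c ≤ boundaryDist a b + boundaryDist b c := by
  have := abs_sub_le a.2 b.2 c.2
  have := abs_nonneg b.1
  simp only [boundaryDist]
  linarith

theorem min_parabolicDist_boundaryDist_le (a b c : ℝ × ℝ) :
    min (parabolicDist a c) (boundaryDist a c) ≤ parabolicDist a b + boundaryDist b c := by
  obtain ⟨x, t⟩ := a
  obtain ⟨y, s⟩ := b
  obtain ⟨z, r⟩ := c
  simp only [parabolicDist, boundaryDist]
  have hx : |x| ≤ |x - y| + |y| := by linarith [abs_sub_abs_le_abs_sub x y]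
  calc min (|x - z| + √|t - r|) (|x| + |z| + |t - r|)
      ≤ min (|x| + |z| + √(|t - s| + |s - r|)) (|x| + |z| + (|t - s| + |s - r|)) := by
        gcongr
        · exact abs_sub _ _
        · exact abs_sub_le _ _ _
        · exact abs_sub_le _ _ _
    _ = |x| + |z| + min √(|t - s| + |s - r|) (|t - s| + |s - r|) := min_add_add_left _ _ _
    _ ≤ |x| + |z| + (√|t - s| + |s - r|) := by
        gcongr
        exact min_sqrt_add_le (abs_nonneg _) (abs_nonneg _)
    _ ≤ |x - y| + √|t - s| + (|y| + |z| + |s - r|) := by linarith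

theorem sdist_eq_norm_add_min {m : ℕ} (p q : E m × ℝ × ℝ) :
    sdist p q = ‖p.1 - q.1‖ + min (parabolicDist p.2 q.2) (boundaryDist p.2 q.2) := by
  simp only [sdist, parabolicDist, boundaryDist, ← min_add_add_left, add_assoc]

/-- The distance `d` satisfies the triangle inequality. -/
theorem sdist_triangle (m : ℕ) (p q r : E m × ℝ × ℝ) :
    sdist p r ≤ sdist p q + sdist q r := by
  have hx := norm_sub_le_norm_sub_add_norm_sub p.1 q.1 r.1
  have hmin := min_le_min_add_min parabolicDist_comm boundaryDist_comm parabolicDist_triangle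
    boundaryDist_triangle min_parabolicDist_boundaryDist_le p.2 q.2 r.2
  simp only [sdist_eq_norm_add_min]
  linarith
end
end

section
/- Suppose s: [t₀, 0] → ℝ satisfies, on a partition t_k = t₀ + kλ of [t₀, t₀/2] into N = ⌈|t₀|/(2λ)⌉ steps, the recursion: s(t_{k+1}) ≥ s(t_k) + c₀ λ whenever a 'good-time' condition holds and s(t_k) ≤ c₀, and s(t_{k+1}) ≥ s(t_k)(1 - C₀ λ) otherwise, with s(t₀) = 0. If the good-time condition holds for at least half the indices k ∈ {0, …, N-1}, and λ ≤ λ₀(c₀, C₀, |t₀|), then s(t_N) ≥ c₁ for a constant c₁ > 0 depending only on c₀, C₀ and |t₀|. -/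
/-!
Every step loses at most a factor `q = 1 - C₀λ`, and over the `N ≈ T/(2λ)` steps these losses
compound to a factor `q ^ N ≥ exp (-C₀ (T + 2))`. If `s` ever exceeds `c₀`, it therefore stays
above `c₀ q ^ N` afterwards. Otherwise every good step is a gain of `c₀λ`, and the at least
`N/2` good steps add up to `c₀λN/2 ≥ c₀T/4`, again up to the factor `q ^ N`.
-/

open Finset Real

theorem exp_neg_two_mul_le_one_sub {x : ℝ} (hx0 : 0 ≤ x) (hx : x ≤ 1 / 2) :
    exp (-(2 * x)) ≤ 1 - x := by
  rw [exp_neg, inv_le_iff_one_le_mul₀ (exp_pos _)]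
  calc (1 : ℝ) ≤ (1 - x) * (2 * x + 1) := by nlinarith
    _ ≤ (1 - x) * exp (2 * x) := by
      gcongr
      · linarith
      · exact add_one_le_exp _

theorem exp_neg_two_mul_le_one_sub_pow {x M : ℝ} {n : ℕ} (hx0 : 0 ≤ x) (hx : x ≤ 1 / 2)
    (hnx : n * x ≤ M) : exp (-(2 * M)) ≤ (1 - x) ^ n :=
  calc exp (-(2 * M)) ≤ exp (-(2 * x)) ^ n := by
        rw [← exp_nat_mul]; exact exp_le_exp.mpr (by linarith)
    _ ≤ (1 - x) ^ n := by gcongr; exact exp_neg_two_mul_le_one_sub hx0 hx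

theorem le_mul_ceil_div {x lam : ℝ} (hlam : 0 < lam) : x ≤ lam * ⌈x / lam⌉₊ := by
  rw [← div_le_iff₀' hlam]; exact Nat.le_ceil _

theorem mul_ceil_div_lt {x lam : ℝ} (hx : 0 ≤ x) (hlam : 0 < lam) :
    lam * ⌈x / lam⌉₊ < x + lam := by
  have := Nat.ceil_lt_add_one (div_nonneg hx hlam.le)
  calc lam * ⌈x / lam⌉₊ < lam * (x / lam + 1) := by gcongr
    _ = x + lam := by field_simp

section Iteration

variable {s : ℕ → ℝ} {q g c : ℝ} {n : ℕ} {G : Finset ℕ}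

theorem mul_pow_le_of_mul_le_succ (hq : 0 ≤ q) (hdecay : ∀ k < n, s k * q ≤ s (k + 1))
    {a d : ℕ} (had : a + d ≤ n) : s a * q ^ d ≤ s (a + d) := by
  induction d with
  | zero => simp
  | succ d ih =>
    calc s a * q ^ (d + 1) = s a * q ^ d * q := by ring
      _ ≤ s (a + d) * q := by gcongr; exact ih (by omega)
      _ ≤ s (a + d + 1) := hdecay _ (by omega)

theorem card_inter_range_succ (G : Finset ℕ) (n : ℕ) :
    #(G ∩ range (n + 1)) = #(G ∩ range n) + if n ∈ G then 1 else 0 := by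
  rw [range_add_one]
  split_ifs with h
  · rw [inter_insert_of_mem h, card_insert_of_notMem (by simp)]
  · rw [inter_insert_of_notMem h, add_zero]

theorem pow_mul_card_le (hq0 : 0 ≤ q) (hq1 : q ≤ 1) (hg : 0 ≤ g) (hs0 : 0 ≤ s 0)
    (hdecay : ∀ k < n, s k * q ≤ s (k + 1)) (hgain : ∀ k < n, k ∈ G → s k + g ≤ s (k + 1)) :
    q ^ n * (g * #(G ∩ range n)) ≤ s n := by
  induction n with
  | zero => simpa using hs0
  | succ n ih =>
    have ih := ih (fun k hk => hdecay k (by omega)) (fun k hk => hgain k (by omega))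
    have hA : 0 ≤ q ^ n * (g * #(G ∩ range n)) := by positivity
    rw [card_inter_range_succ]
    split_ifs with hn
    · calc q ^ (n + 1) * (g * ↑(#(G ∩ range n) + 1))
            = q ^ n * (g * #(G ∩ range n)) * q + q ^ (n + 1) * g := by push_cast; ring
          _ ≤ q ^ n * (g * #(G ∩ range n)) + g := by
            exact add_le_add (mul_le_of_le_one_right hA hq1)
              (mul_le_of_le_one_left hg (pow_le_one₀ hq0 hq1))
          _ ≤ s (n + 1) := by linarith [hgain n n.lt_succ_self hn]
    · calc q ^ (n + 1) * (g * ↑(#(G ∩ range n) + 0))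
            = q ^ n * (g * #(G ∩ range n)) * q := by push_cast; ring
          _ ≤ s n * q := by gcongr
          _ ≤ s (n + 1) := hdecay n n.lt_succ_self

theorem pow_mul_min_le (hq0 : 0 ≤ q) (hq1 : q ≤ 1) (hg : 0 ≤ g) (hc : 0 ≤ c) (hs0 : 0 ≤ s 0)
    (hdecay : ∀ k < n, s k * q ≤ s (k + 1))
    (hgain : ∀ k < n, k ∈ G → s k ≤ c → s k + g ≤ s (k + 1)) :
    q ^ n * min c (g * #(G ∩ range n)) ≤ s n := by
  by_cases hexceed : ∃ m ≤ n, c < s m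
  · obtain ⟨m, hmn, hm⟩ := hexceed
    calc q ^ n * min c (g * #(G ∩ range n)) ≤ c * q ^ (n - m) := by
          rw [mul_comm]
          exact mul_le_mul (min_le_left _ _) (pow_le_pow_of_le_one hq0 hq1 (Nat.sub_le n m))
            (by positivity) hc
      _ ≤ s m * q ^ (n - m) := by gcongr
      _ ≤ s n := by
        simpa [Nat.add_sub_cancel' hmn] using
          mul_pow_le_of_mul_le_succ hq0 hdecay (Nat.add_sub_cancel' hmn).le
  · push Not at hexceed
    calc q ^ n * min c (g * #(G ∩ range n)) ≤ q ^ n * (g * #(G ∩ range n)) := by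
          gcongr; exact min_le_right _ _
      _ ≤ s n := pow_mul_card_le hq0 hq1 hg hs0 hdecay
          fun k hk hkG => hgain k hk hkG (hexceed k hk.le)

end Iteration

/-- Discrete iteration lemma: if a nonnegative sequence `s` (with `s 0 = 0`)
gains `c₀λ` at each "good" step where it is below `c₀`, and loses at most a
factor `(1 - C₀λ)` at the other steps, and at least half of the
`N = ⌈T/(2λ)⌉` steps are good, then `s N ≥ c₁ > 0` with `c₁` depending only on
`c₀, C₀, T`, provided `λ ≤ λ₀(c₀, C₀, T)`. -/
theorem discrete_iteration (c₀ C₀ T : ℝ) (hc₀ : 0 < c₀) (hC₀ : 0 < C₀) (hT : 0 < T) :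
    ∃ c₁ : ℝ, 0 < c₁ ∧ ∃ lam₀ : ℝ, 0 < lam₀ ∧
      ∀ lam : ℝ, 0 < lam → lam ≤ lam₀ →
      ∀ N : ℕ, N = ⌈T / (2 * lam)⌉₊ →
      ∀ (s : ℕ → ℝ) (G : Finset ℕ),
        s 0 = 0 → (∀ k, 0 ≤ s k) →
        (∀ k < N,
          (k ∈ G ∧ s k ≤ c₀ → s k + c₀ * lam ≤ s (k + 1)) ∧
          (¬(k ∈ G ∧ s k ≤ c₀) → s k * (1 - C₀ * lam) ≤ s (k + 1))) →
        (N : ℝ) / 2 ≤ ((G ∩ Finset.range N).card : ℝ) →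
        c₁ ≤ s N := by
  refine ⟨exp (-(2 * (C₀ * (T / 2 + 1)))) * (c₀ * min 1 (T / 4)), by positivity,
    min (1 / (2 * C₀)) 1, by positivity, ?_⟩
  intro lam hlam hlam₀ N hN s G _ hs hrec hG
  have hlamC : C₀ * lam ≤ 1 / 2 := by
    have := (le_div_iff₀' (by positivity)).mp (hlam₀.trans (min_le_left _ _)); linarith
  have hlam1 : lam ≤ 1 := hlam₀.trans (min_le_right _ _)
  rw [div_mul_eq_div_div] at hN
  have hNlow : T / 2 ≤ lam * N := hN ▸ le_mul_ceil_div hlam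
  have hNhigh : lam * N < T / 2 + lam := hN ▸ mul_ceil_div_lt (by positivity) hlam
  have hdecay : ∀ k < N, s k * (1 - C₀ * lam) ≤ s (k + 1) := fun k hk => by
    by_cases hgood : k ∈ G ∧ s k ≤ c₀
    · have := (hrec k hk).1 hgood
      have := mul_nonneg (hs k) (by positivity : 0 ≤ C₀ * lam)
      nlinarith
    · exact (hrec k hk).2 hgood
  have hqN : exp (-(2 * (C₀ * (T / 2 + 1)))) ≤ (1 - C₀ * lam) ^ N := by
    refine exp_neg_two_mul_le_one_sub_pow (by positivity) hlamC ?_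
    nlinarith [mul_le_mul_of_nonneg_left (hNhigh.le.trans (by linarith : T / 2 + lam ≤ T / 2 + 1))
      hC₀.le]
  have hmin : c₀ * min 1 (T / 4) ≤ min c₀ (c₀ * lam * #(G ∩ range N)) := by
    refine le_min (mul_le_of_le_one_right hc₀.le (min_le_left _ _)) ?_
    rw [mul_assoc]
    gcongr
    calc min 1 (T / 4) ≤ T / 4 := min_le_right _ _
      _ ≤ lam * #(G ∩ range N) := by nlinarith [mul_le_mul_of_nonneg_left hG hlam.le]
  calc exp (-(2 * (C₀ * (T / 2 + 1)))) * (c₀ * min 1 (T / 4))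
      ≤ (1 - C₀ * lam) ^ N * min c₀ (c₀ * lam * #(G ∩ range N)) :=
        mul_le_mul hqN hmin (by positivity) (pow_nonneg (by linarith) _)
    _ ≤ s N := pow_mul_min_le (by linarith) (sub_le_self _ (by positivity)) (by positivity)
        hc₀.le (hs 0) hdecay fun k hk hkG hsk => (hrec k hk).1 ⟨hkG, hsk⟩
end
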